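/- arXiv:2006.07648 — 4 statements merged into one kernel-verified Lean document; each statement's English description precedes it below -/
import Mathlib

section
/- Let N be a Poisson random variable with mean μ ≥ 2. Then for any η > 0, P((x - log(1+x))·N > x·η·√μ/2) ≤ exp(-η/2 + μ/(μ-1)) ≤ e²·exp(-η/2), where x = 1/√μ. -/
open MeasureTheory Real

theorem poisson_chernoff_tail_sqrt {Ω : Type*} [MeasurableSpace Ω]
    (P : Measure Ω) [IsProbabilityMeasure P]
    (N : Ω → ℕ) (μ : ℝ) (hμ : 2 ≤ μ)
    (hN : ∀ k : ℕ, P {ω | N ω = k} = ENNReal.ofReal (Real.exp (-μ) * μ ^ k / k.factorial))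
    (η : ℝ) (hη : 0 < η) (x : ℝ) (hx : x = 1 / Real.sqrt μ) :
    P {ω | x * η * Real.sqrt μ / 2 < (x - Real.log (1 + x)) * (N ω : ℝ)} ≤
      ENNReal.ofReal (Real.exp (-η / 2 + μ / (μ - 1))) ∧
    Real.exp (-η / 2 + μ / (μ - 1)) ≤ Real.exp 2 * Real.exp (-η / 2) := by
  have hμ0 : (0:ℝ) < μ := by linarith
  have hμ1 : (0:ℝ) < μ - 1 := by linarith
  have hs : 0 < Real.sqrt μ := Real.sqrt_pos.2 hμ0
  have hx0 : 0 < x := by rw [hx]; positivity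
  have hx1 : x < 1 := by
    rw [hx, div_lt_one hs]
    calc (1:ℝ) < Real.sqrt 2 := by
          rw [show (1:ℝ) = Real.sqrt 1 by simp]
          exact Real.sqrt_lt_sqrt (by norm_num) (by norm_num)
      _ ≤ Real.sqrt μ := Real.sqrt_le_sqrt hμ
  have hx2 : x ^ 2 = 1 / μ := by
    rw [hx, div_pow, one_pow, Real.sq_sqrt hμ0.le]
  set c : ℝ := x - Real.log (1 + x) with hc
  have h1x : (0:ℝ) < 1 + x := by linarith
  -- key inequality: exp c ≤ μ / (μ - 1)
  have h2 : Real.exp x * (1 - x) ≤ 1 := by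
    calc Real.exp x * (1 - x) ≤ Real.exp x * Real.exp (-x) := by
          have := Real.add_one_le_exp (-x)
          nlinarith [Real.exp_pos x]
      _ = 1 := by rw [← Real.exp_add]; simp
  have hμx : μ * x ^ 2 = 1 := by rw [hx2]; field_simp
  have hec : Real.exp c ≤ μ / (μ - 1) := by
    have h1 : Real.exp c = Real.exp x / (1 + x) := by
      rw [hc, Real.exp_sub, Real.exp_log h1x]
    rw [h1, div_le_div_iff₀ h1x hμ1]
    have heq : Real.exp x * (μ - 1) = (Real.exp x * (1 - x)) * (μ * (1 + x)) := by
      linear_combination Real.exp x * hμx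
    calc Real.exp x * (μ - 1) = (Real.exp x * (1 - x)) * (μ * (1 + x)) := heq
      _ ≤ 1 * (μ * (1 + x)) := mul_le_mul_of_nonneg_right h2 (by positivity)
      _ = μ * (1 + x) := one_mul _
  have hkey : μ * Real.exp c - μ ≤ μ / (μ - 1) := by
    have h4 : μ * Real.exp c ≤ μ * (μ / (μ - 1)) := mul_le_mul_of_nonneg_left hec hμ0.le
    have h5 : μ * (μ / (μ - 1)) - μ = μ / (μ - 1) := by field_simp; ring
    linarith
  constructor
  · -- Chernoff bound
    have hthr : x * η * Real.sqrt μ = η := by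
      rw [hx]; field_simp
    set T : ℕ → Set Ω := fun k => if η / 2 < c * k then {ω | N ω = k} else ∅ with hT
    have hsub : {ω | x * η * Real.sqrt μ / 2 < (x - Real.log (1 + x)) * (N ω : ℝ)} ⊆
        ⋃ k, T k := by
      intro ω hω
      simp only [Set.mem_setOf_eq, ← hc, hthr] at hω
      refine Set.mem_iUnion.2 ⟨N ω, ?_⟩
      simp [hT, hω]
    have hle : ∀ k : ℕ, P (T k) ≤
        ENNReal.ofReal (Real.exp (-μ) * μ ^ k / k.factorial * Real.exp (c * k - η / 2)) := by
      intro k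
      by_cases hk : η / 2 < c * k
      · simp only [hT, if_pos hk, hN k]
        apply ENNReal.ofReal_le_ofReal
        have h1 : (1:ℝ) ≤ Real.exp (c * k - η / 2) := Real.one_le_exp (by linarith)
        have hp : (0:ℝ) ≤ Real.exp (-μ) * μ ^ k / k.factorial := by positivity
        nlinarith
      · simp [hT, if_neg hk]
    have hsummand : ∀ k : ℕ,
        Real.exp (-μ) * μ ^ k / k.factorial * Real.exp (c * k - η / 2) =
        Real.exp (-μ - η / 2) * ((μ * Real.exp c) ^ k / k.factorial) := by
      intro k
      have : Real.exp (c * k) = Real.exp c ^ k := by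
        rw [mul_comm, Real.exp_nat_mul]
      rw [Real.exp_sub, Real.exp_sub, this, mul_pow]
      field_simp
    have hsumm : Summable (fun k : ℕ => Real.exp (-μ - η / 2) *
        ((μ * Real.exp c) ^ k / k.factorial)) :=
      (Real.summable_pow_div_factorial _).mul_left _
    have htsum : ∑' k : ℕ, Real.exp (-μ - η / 2) * ((μ * Real.exp c) ^ k / k.factorial) =
        Real.exp (-μ - η / 2) * Real.exp (μ * Real.exp c) := by
      rw [tsum_mul_left]
      congr 1
      rw [Real.exp_eq_exp_ℝ, NormedSpace.exp_eq_tsum_div]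
    calc P {ω | x * η * Real.sqrt μ / 2 < (x - Real.log (1 + x)) * (N ω : ℝ)}
        ≤ P (⋃ k, T k) := measure_mono hsub
      _ ≤ ∑' k, P (T k) := measure_iUnion_le T
      _ ≤ ∑' k : ℕ, ENNReal.ofReal (Real.exp (-μ) * μ ^ k / k.factorial *
            Real.exp (c * k - η / 2)) := ENNReal.tsum_le_tsum hle
      _ = ∑' k : ℕ, ENNReal.ofReal (Real.exp (-μ - η / 2) *
            ((μ * Real.exp c) ^ k / k.factorial)) := by
          exact tsum_congr fun k => by rw [hsummand k]
      _ = ENNReal.ofReal (∑' k : ℕ, Real.exp (-μ - η / 2) *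
            ((μ * Real.exp c) ^ k / k.factorial)) := by
          rw [ENNReal.ofReal_tsum_of_nonneg (fun k => by positivity) hsumm]
      _ ≤ ENNReal.ofReal (Real.exp (-η / 2 + μ / (μ - 1))) := by
          rw [htsum, ← Real.exp_add]
          apply ENNReal.ofReal_le_ofReal
          apply Real.exp_le_exp.2
          linarith
  · rw [← Real.exp_add]
    apply Real.exp_le_exp.2
    have : μ / (μ - 1) ≤ 2 := by
      rw [div_le_iff₀ hμ1]; linarith
    linarith
end

section
/- Let f : ℝ^n → ℝ be convex and differentiable, let β, β̂ ∈ ℝ^n, let λ > 0, and suppose β̂ minimizes θ ↦ f(θ) + λ‖θ‖₁ over ℝ^n. Set β̃ = β̂ - β and z* = ‖∇f(β)‖_∞. Let S be the support of β. Then (λ - z*)·‖β̃_{S^c}‖₁ ≤ β̃ᵀ(∇f(β̂) - ∇f(β)) + (λ - z*)·‖β̃_{S^c}‖₁ ≤ (λ + z*)·‖β̃_S‖₁. -/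
open Real Set Filter Topology

section Aux
variable {n : ℕ}

lemma lasso_curve_hasDerivAt (f : (Fin n → ℝ) → ℝ) (hdiff : Differentiable ℝ f)
    (x v : Fin n → ℝ) (t : ℝ) :
    HasDerivAt (fun s : ℝ => f (x + s • v)) (fderiv ℝ f (x + t • v) v) t := by
  have hcurve : HasDerivAt (fun s : ℝ => x + s • v) v t := by
    have h1 : HasDerivAt (fun s : ℝ => s • v) ((1:ℝ) • v) t :=
      (hasDerivAt_id t).smul_const v
    simpa using h1.const_add x
  exact ((hdiff (x + t • v)).hasFDerivAt.comp_hasDerivAt t hcurve)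

lemma lasso_curve_convex (f : (Fin n → ℝ) → ℝ) (hconv : ConvexOn ℝ Set.univ f)
    (x v : Fin n → ℝ) :
    ConvexOn ℝ Set.univ (fun s : ℝ => f (x + s • v)) := by
  have h := hconv.comp_affineMap (AffineMap.lineMap x (x + v))
  have he : (fun s : ℝ => f (x + s • v)) = f ∘ (AffineMap.lineMap x (x + v)) := by
    funext s
    have harg : x + s • v = (AffineMap.lineMap x (x + v)) s := by
      simp only [AffineMap.lineMap_apply, vsub_eq_sub, vadd_eq_add]
      module
    simp only [Function.comp_apply, harg]
  rw [he]
  simpa using h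

lemma lasso_fderiv_le_sub (f : (Fin n → ℝ) → ℝ) (hconv : ConvexOn ℝ Set.univ f)
    (hdiff : Differentiable ℝ f) (x v : Fin n → ℝ) :
    fderiv ℝ f x v ≤ f (x + v) - f x := by
  have hg := lasso_curve_hasDerivAt f hdiff x v 0
  simp only [zero_smul, add_zero] at hg
  have hc := lasso_curve_convex f hconv x v
  have h := hc.le_slope_of_hasDerivAt (mem_univ (0:ℝ)) (mem_univ (1:ℝ)) one_pos hg
  simpa [slope_def_field] using h

lemma lasso_min_fderiv_bound (f : (Fin n → ℝ) → ℝ) (hdiff : Differentiable ℝ f)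
    (β βhat : Fin n → ℝ) (lam : ℝ)
    (hmin : ∀ θ : Fin n → ℝ,
      f βhat + lam * ∑ i, |βhat i| ≤ f θ + lam * ∑ i, |θ i|)
    (hlam : 0 < lam) :
    lam * (∑ i, |βhat i|) - lam * (∑ i, |β i|) ≤ fderiv ℝ f βhat (β - βhat) := by
  set v := β - βhat with hv
  have hg := lasso_curve_hasDerivAt f hdiff βhat v 0
  simp only [zero_smul, add_zero] at hg
  have htend : Tendsto (slope (fun s : ℝ => f (βhat + s • v)) 0) (𝓝[>] 0)
      (𝓝 (fderiv ℝ f βhat v)) :=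
    (hasDerivAt_iff_tendsto_slope.mp hg).mono_left
      (nhdsWithin_mono 0 (fun t ht => ne_of_gt ht))
  refine ge_of_tendsto htend ?_
  filter_upwards [Ioc_mem_nhdsGT (zero_lt_one (α := ℝ))] with t ht
  obtain ⟨ht0, ht1⟩ := ht
  rw [slope_def_field, sub_zero, zero_smul, add_zero, le_div_iff₀ ht0]
  have hmint := hmin (βhat + t • v)
  have hnorm : ∑ i, |βhat i + t * v i| ≤ (1 - t) * ∑ i, |βhat i| + t * ∑ i, |β i| := by
    rw [Finset.mul_sum, Finset.mul_sum, ← Finset.sum_add_distrib]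
    apply Finset.sum_le_sum
    intro i _
    have h1 : βhat i + t * v i = (1 - t) * βhat i + t * β i := by
      simp only [hv, Pi.sub_apply]; ring
    rw [h1]
    calc |(1 - t) * βhat i + t * β i| ≤ |(1 - t) * βhat i| + |t * β i| := abs_add_le _ _
      _ = (1 - t) * |βhat i| + t * |β i| := by
          rw [abs_mul, abs_mul, abs_of_nonneg (by linarith), abs_of_nonneg ht0.le]
  have hval : ∀ i, (βhat + t • v) i = βhat i + t * v i := fun i => rfl
  simp only [hval] at hmint
  nlinarith [hmint, hnorm]

lemma lasso_fderiv_abs_le (L : (Fin n → ℝ) →L[ℝ] ℝ) (v : Fin n → ℝ) :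
    |L v| ≤ (⨆ i, |L (Pi.single i 1)|) * ∑ i, |v i| := by
  have hrep : v = ∑ i, v i • (Pi.single i (1:ℝ) : Fin n → ℝ) := by
    funext j
    simp [Pi.single_apply, Finset.sum_apply]
  have hL : L v = ∑ i, v i * L (Pi.single i 1) := by
    conv_lhs => rw [hrep]
    simp [map_sum]
  rw [hL, Finset.mul_sum]
  calc |∑ i, v i * L (Pi.single i 1)| ≤ ∑ i, |v i * L (Pi.single i 1)| :=
        Finset.abs_sum_le_sum_abs _ _
    _ ≤ ∑ i, (⨆ j, |L (Pi.single j 1)|) * |v i| := by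
        apply Finset.sum_le_sum
        intro i _
        rw [abs_mul, mul_comm]
        apply mul_le_mul_of_nonneg_right _ (abs_nonneg _)
        exact le_ciSup (f := fun j => |L (Pi.single j (1:ℝ))|)
          (Set.Finite.bddAbove (Set.finite_range _)) i

end Aux

theorem lasso_basic_inequality {n : ℕ}
    (f : (Fin n → ℝ) → ℝ) (hconv : ConvexOn ℝ Set.univ f) (hdiff : Differentiable ℝ f)
    (β βhat : Fin n → ℝ) (lam : ℝ) (hlam : 0 < lam)
    (hmin : ∀ θ : Fin n → ℝ,
      f βhat + lam * ∑ i, |βhat i| ≤ f θ + lam * ∑ i, |θ i|)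
    (S : Finset (Fin n)) (hS : ∀ i, i ∈ S ↔ β i ≠ 0)
    (zstar : ℝ) (hz : zstar = ⨆ i, |fderiv ℝ f β (Pi.single i 1)|) :
    (lam - zstar) * ∑ i ∈ Sᶜ, |βhat i - β i| ≤
      (fderiv ℝ f βhat (βhat - β) - fderiv ℝ f β (βhat - β)) +
        (lam - zstar) * ∑ i ∈ Sᶜ, |βhat i - β i| ∧
    (fderiv ℝ f βhat (βhat - β) - fderiv ℝ f β (βhat - β)) +
        (lam - zstar) * ∑ i ∈ Sᶜ, |βhat i - β i| ≤
      (lam + zstar) * ∑ i ∈ S, |βhat i - β i| := by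
  set D1 := fderiv ℝ f βhat (βhat - β) with hD1
  set D0 := fderiv ℝ f β (βhat - β) with hD0
  set A := ∑ i ∈ Sᶜ, |βhat i - β i| with hA
  set B := ∑ i ∈ S, |βhat i - β i| with hB
  -- negation identity
  have hneg : fderiv ℝ f βhat (β - βhat) = -D1 := by
    rw [hD1, ← neg_sub βhat β, map_neg]
  -- convexity: D0 ≤ f βhat - f β
  have hB1 : D0 ≤ f βhat - f β := by
    have h := lasso_fderiv_le_sub f hconv hdiff β (βhat - β)
    rwa [show β + (βhat - β) = βhat by abel] at h
  -- convexity: -D1 ≤ f β - f βhat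
  have hB2 : -D1 ≤ f β - f βhat := by
    have h := lasso_fderiv_le_sub f hconv hdiff βhat (β - βhat)
    rw [hneg] at h
    rwa [show βhat + (β - βhat) = β by abel] at h
  -- minimality bound: lam(‖βhat‖-‖β‖) ≤ -D1
  have hC : lam * (∑ i, |βhat i|) - lam * (∑ i, |β i|) ≤ -D1 := by
    have h := lasso_min_fderiv_bound f hdiff β βhat lam hmin hlam
    rwa [hneg] at h
  -- dual norm bound: |D0| ≤ zstar * Σ|βhat i - β i|
  have hD : |D0| ≤ zstar * ∑ i, |βhat i - β i| := by
    rw [hz, hD0]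
    exact lasso_fderiv_abs_le (fderiv ℝ f β) (βhat - β)
  -- sum splitting
  have hsplit : ∑ i, |βhat i - β i| = B + A := by
    rw [hB, hA]
    exact (Finset.sum_add_sum_compl S _).symm
  -- β vanishes on Sᶜ
  have hβ0 : ∀ i ∈ Sᶜ, β i = 0 := by
    intro i hi
    have := (hS i).mp
    by_contra h
    exact (Finset.mem_compl.mp hi) ((hS i).mpr h)
  -- norm difference bound
  have hnorm1 : (∑ i, |β i|) - (∑ i, |βhat i|) ≤ B - A := by
    have h1 : ∑ i, |β i| = ∑ i ∈ S, |β i| := by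
      symm
      apply Finset.sum_subset (Finset.subset_univ S)
      intro i _ hi
      rw [hβ0 i (Finset.mem_compl.mpr hi), abs_zero]
    have h2 : ∑ i, |βhat i| = (∑ i ∈ S, |βhat i|) + ∑ i ∈ Sᶜ, |βhat i| :=
      (Finset.sum_add_sum_compl S _).symm
    have h3 : ∑ i ∈ Sᶜ, |βhat i| = A := by
      rw [hA]
      apply Finset.sum_congr rfl
      intro i hi
      rw [hβ0 i hi, sub_zero]
    have h4 : (∑ i ∈ S, |β i|) - (∑ i ∈ S, |βhat i|) ≤ B := by
      rw [hB, ← Finset.sum_sub_distrib]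
      apply Finset.sum_le_sum
      intro i _
      calc |β i| - |βhat i| ≤ |β i - βhat i| := abs_sub_abs_le_abs_sub _ _
        _ = |βhat i - β i| := abs_sub_comm _ _
    rw [h1, h2, h3]
    linarith
  have hD' : -D0 ≤ zstar * (B + A) := by
    rw [← hsplit]
    calc -D0 ≤ |D0| := neg_le_abs D0
      _ ≤ zstar * ∑ i, |βhat i - β i| := hD
  have hC' : D1 ≤ lam * (B - A) := by
    have : lam * (∑ i, |β i|) - lam * (∑ i, |βhat i|) ≤ lam * (B - A) := by
      rw [← mul_sub]
      exact mul_le_mul_of_nonneg_left hnorm1 hlam.le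
    linarith
  constructor
  · linarith
  · nlinarith [hC', hD']
end

section
/- Under the assumptions of the previous statement, if additionally ξ > 1 and ‖∇f(β)‖_∞ ≤ λ(ξ-1)/(ξ+1), then β̃ = β̂ - β belongs to the cone C(ξ,S), i.e., ‖β̃_{S^c}‖₁ ≤ ξ‖β̃_S‖₁. -/
open Real

theorem lasso_error_in_cone {n : ℕ}
    (f : (Fin n → ℝ) → ℝ) (hconv : ConvexOn ℝ Set.univ f) (hdiff : Differentiable ℝ f)
    (β βhat : Fin n → ℝ) (lam ξ : ℝ) (hlam : 0 < lam) (hξ : 1 < ξ)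
    (hmin : ∀ θ : Fin n → ℝ,
      f βhat + lam * ∑ i, |βhat i| ≤ f θ + lam * ∑ i, |θ i|)
    (S : Finset (Fin n)) (hS : ∀ i, i ∈ S ↔ β i ≠ 0)
    (hgrad : (⨆ i, |fderiv ℝ f β (Pi.single i 1)|) ≤ lam * (ξ - 1) / (ξ + 1)) :
    ∑ i ∈ Sᶜ, |βhat i - β i| ≤ ξ * ∑ i ∈ S, |βhat i - β i| := by
  set v : Fin n → ℝ := fun i => βhat i - β i with hv
  set γ : ℝ := lam * (ξ - 1) / (ξ + 1) with hγdef
  have hξ1 : (0:ℝ) < ξ + 1 := by linarith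
  have hγ : 0 ≤ γ := by
    apply div_nonneg _ (le_of_lt hξ1)
    nlinarith
  set a : ℝ := ∑ i ∈ S, |v i| with hadef
  set b : ℝ := ∑ i ∈ Sᶜ, |v i| with hbdef
  have ha : 0 ≤ a := Finset.sum_nonneg fun i _ => abs_nonneg _
  have hb : 0 ≤ b := Finset.sum_nonneg fun i _ => abs_nonneg _
  -- each coordinate of the gradient is bounded by γ
  have hL : ∀ i, |fderiv ℝ f β (Pi.single i 1)| ≤ γ := fun i =>
    le_trans (le_ciSup (f := fun j => |fderiv ℝ f β (Pi.single j 1)|) (Set.Finite.bddAbove (Set.finite_range _)) i) hgrad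
  -- the gradient pairing with v is bounded
  have hgradv : |fderiv ℝ f β v| ≤ γ * (a + b) := by
    have hexp : fderiv ℝ f β v = ∑ i, v i • (fderiv ℝ f β) (Pi.single i 1) := by
      have h := LinearMap.pi_apply_eq_sum_univ ((fderiv ℝ f β) : (Fin n → ℝ) →ₗ[ℝ] ℝ) v
      have h2 : ∀ i : Fin n, (Pi.single i 1 : Fin n → ℝ) = fun j => if i = j then 1 else 0 := by
        intro i; funext j; simp [Pi.single_apply, eq_comm]
      simpa [h2] using h
    have hsum : ∑ i ∈ S, |v i| + ∑ i ∈ Sᶜ, |v i| = ∑ i, |v i| :=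
      Finset.sum_add_sum_compl S _
    calc |fderiv ℝ f β v| = |∑ i, v i • (fderiv ℝ f β) (Pi.single i 1)| := by rw [hexp]
      _ ≤ ∑ i, |v i • (fderiv ℝ f β) (Pi.single i 1)| := Finset.abs_sum_le_sum_abs _ _
      _ ≤ ∑ i, |v i| * γ := by
          apply Finset.sum_le_sum
          intro i _
          rw [smul_eq_mul, abs_mul]
          exact mul_le_mul_of_nonneg_left (hL i) (abs_nonneg _)
      _ = γ * (a + b) := by rw [← Finset.sum_mul, hadef, hbdef, hsum, mul_comm]
  -- convexity: directional derivative below the secant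
  have key : fderiv ℝ f β v ≤ f βhat - f β := by
    set g : ℝ → ℝ := fun t => f (t • v + β) with hg
    have hgconv : ConvexOn ℝ Set.univ g := by
      have hcc := hconv.comp_affineMap (AffineMap.lineMap β βhat : ℝ →ᵃ[ℝ] (Fin n → ℝ))
      simp only [Set.preimage_univ] at hcc
      have heq : g = f ∘ (AffineMap.lineMap β βhat : ℝ →ᵃ[ℝ] (Fin n → ℝ)) := by
        funext t
        simp only [hg, Function.comp_apply, AffineMap.lineMap_apply]
        congr 1
      rw [heq]
      exact hcc
    have hcurve : HasDerivAt (fun t : ℝ => t • v + β) v 0 := by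
      simpa using ((hasDerivAt_id (0:ℝ)).smul_const v).add_const β
    have hgderiv : HasDerivAt g (fderiv ℝ f β v) 0 := by
      have hf : HasFDerivAt f (fderiv ℝ f β) ((0:ℝ) • v + β) := by
        simpa using (hdiff β).hasFDerivAt
      exact hf.comp_hasDerivAt 0 hcurve
    have := hgconv.le_slope_of_hasDerivAt (Set.mem_univ (0:ℝ)) (Set.mem_univ (1:ℝ))
      one_pos hgderiv
    rw [slope_def_field] at this
    have h0 : g 0 = f β := by simp [hg]
    have h1 : g 1 = f βhat := by
      show f ((1:ℝ) • v + β) = f βhat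
      rw [show (1:ℝ) • v + β = βhat by funext i; simp [hv]]
    rw [h0, h1] at this
    linarith [this]
  -- decompose the ℓ1 norms
  set c : ℝ := ∑ i ∈ S, |βhat i| with hcdef
  have hbhat : ∑ i, |βhat i| = c + b := by
    rw [hcdef, hbdef, ← Finset.sum_add_sum_compl S fun i => |βhat i|]
    congr 1
    apply Finset.sum_congr rfl
    intro i hi
    have : β i = 0 := by
      by_contra h
      exact (Finset.mem_compl.mp hi) ((hS i).mpr h)
    simp [hv, this]
  have hβle : ∑ i, |β i| ≤ c + a := by
    rw [← Finset.sum_add_sum_compl S fun i => |β i|]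
    have h2 : ∑ i ∈ Sᶜ, |β i| = 0 := by
      apply Finset.sum_eq_zero
      intro i hi
      have : β i = 0 := by
        by_contra h
        exact (Finset.mem_compl.mp hi) ((hS i).mpr h)
      simp [this]
    rw [h2, add_zero, hcdef, hadef, ← Finset.sum_add_distrib]
    apply Finset.sum_le_sum
    intro i _
    have := abs_sub_abs_le_abs_sub (β i) (βhat i)
    rw [abs_sub_comm] at this
    simp only [hv]
    linarith
  -- basic inequality
  have hkey : lam * b ≤ lam * a + γ * (a + b) := by
    have h1 := hmin β
    rw [hbhat] at h1
    have h2 : lam * ∑ i, |β i| ≤ lam * (c + a) :=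
      mul_le_mul_of_nonneg_left hβle (le_of_lt hlam)
    have h3 : f β - f βhat ≤ γ * (a + b) := by
      have := neg_abs_le (fderiv ℝ f β v)
      linarith [key]
    nlinarith
  -- conclude
  have hγeq : γ * (ξ + 1) = lam * (ξ - 1) := by
    rw [hγdef]
    field_simp
  nlinarith [mul_le_mul_of_nonneg_right hkey (le_of_lt hξ1), mul_pos hlam hξ1,
    mul_nonneg (le_of_lt hlam) ha, mul_nonneg (le_of_lt hlam) hb]
end

section
/- Let ℓ(θ) = Σ_c [ -n_c·θᵀz_c + t_c·exp(θᵀz_c) ] with t_c ≥ 0 and z_c ∈ ℝ^d over a finite index set. Then for any β, b ∈ ℝ^d, setting c_b = max_c exp(|bᵀz_c|), we have c_b^{-1}·bᵀ∇²ℓ(β)b ≤ bᵀ(∇ℓ(β+b) - ∇ℓ(β)) ≤ c_b·bᵀ∇²ℓ(β)b, where bᵀ∇²ℓ(β)b = Σ_c t_c·exp(βᵀz_c)·(bᵀz_c)². -/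
/-!
The gradient of `ℓ` at `θ` is `∑ c, (-n c + t c * exp (θᵀz c)) • z c`, so with `u c = bᵀz c` the
gradient increment along `b` is `∑ c, t c * exp (βᵀz c) * u c * (exp (u c) - 1)`. Each term is
compared with the matching term of the Hessian form through
`exp (-|u|) * u ^ 2 ≤ u * (exp u - 1) ≤ exp |u| * u ^ 2`, which holds because `exp u - 1` lies
between `u` and `u * exp u`.
-/

open Real

lemma exp_sub_one_le_mul_exp (u : ℝ) : exp u - 1 ≤ u * exp u := by
  have h := mul_le_mul_of_nonneg_left (one_sub_le_exp_neg u) (exp_pos u).le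
  rw [← exp_add, add_neg_cancel, exp_zero] at h
  linarith

lemma exp_neg_abs_mul_sq_le_mul_exp_sub_one (u : ℝ) :
    exp (-|u|) * u ^ 2 ≤ u * (exp u - 1) := by
  have hlow := add_one_le_exp u
  have hupp := exp_sub_one_le_mul_exp u
  rcases le_or_gt 0 u with hu | hu
  · have : exp (-|u|) ≤ 1 := exp_le_one_iff.mpr (neg_nonpos.mpr (abs_nonneg u))
    nlinarith [mul_le_mul_of_nonneg_right this (sq_nonneg u)]
  · rw [abs_of_neg hu, neg_neg]
    nlinarith

lemma mul_exp_sub_one_le_exp_abs_mul_sq (u : ℝ) :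
    u * (exp u - 1) ≤ exp |u| * u ^ 2 := by
  have hlow := add_one_le_exp u
  have hupp := exp_sub_one_le_mul_exp u
  rcases le_or_gt 0 u with hu | hu
  · rw [abs_of_nonneg hu]
    nlinarith
  · have : 1 ≤ exp |u| := one_le_exp (abs_nonneg u)
    nlinarith [mul_le_mul_of_nonneg_right this (sq_nonneg u)]

section ExpLinearLoss

variable {ι E : Type*} [Fintype ι] [NormedAddCommGroup E] [NormedSpace ℝ E]

noncomputable def expLinearLoss (n t : ι → ℝ) (L : ι → E →L[ℝ] ℝ) (θ : E) : ℝ :=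
  ∑ c, (-(n c) * L c θ + t c * exp (L c θ))

variable (n t : ι → ℝ) (L : ι → E →L[ℝ] ℝ)

theorem hasFDerivAt_expLinearLoss (θ : E) :
    HasFDerivAt (expLinearLoss n t L) (∑ c, (-(n c) + t c * exp (L c θ)) • L c) θ := by
  unfold expLinearLoss
  refine HasFDerivAt.fun_sum fun c _ => ?_
  convert ((L c).hasFDerivAt.const_mul (-(n c))).fun_add
    ((L c).hasFDerivAt.exp.const_mul (t c)) using 1
  rw [add_smul, smul_smul]

theorem fderiv_expLinearLoss_apply (θ v : E) :
    fderiv ℝ (expLinearLoss n t L) θ v = ∑ c, (-(n c) + t c * exp (L c θ)) * L c v := by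
  simp [(hasFDerivAt_expLinearLoss n t L θ).fderiv]

theorem fderiv_expLinearLoss_add_sub (β b : E) :
    fderiv ℝ (expLinearLoss n t L) (β + b) b - fderiv ℝ (expLinearLoss n t L) β b =
      ∑ c, t c * exp (L c β) * (L c b * (exp (L c b) - 1)) := by
  simp only [fderiv_expLinearLoss_apply, ← Finset.sum_sub_distrib, map_add, exp_add]
  congr! 1 with c
  ring

variable {n t L} {C : ℝ}

theorem fderiv_expLinearLoss_add_sub_le (ht : ∀ c, 0 ≤ t c) (β b : E)
    (hC : ∀ c, exp |L c b| ≤ C) :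
    fderiv ℝ (expLinearLoss n t L) (β + b) b - fderiv ℝ (expLinearLoss n t L) β b ≤
      C * ∑ c, t c * exp (L c β) * L c b ^ 2 := by
  rw [fderiv_expLinearLoss_add_sub, Finset.mul_sum]
  refine Finset.sum_le_sum fun c _ => ?_
  have hw : 0 ≤ t c * exp (L c β) := mul_nonneg (ht c) (exp_pos _).le
  calc t c * exp (L c β) * (L c b * (exp (L c b) - 1))
      ≤ t c * exp (L c β) * (exp |L c b| * L c b ^ 2) :=
        mul_le_mul_of_nonneg_left (mul_exp_sub_one_le_exp_abs_mul_sq _) hw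
    _ ≤ t c * exp (L c β) * (C * L c b ^ 2) := by gcongr; exact hC c
    _ = C * (t c * exp (L c β) * L c b ^ 2) := by ring

theorem le_fderiv_expLinearLoss_add_sub (ht : ∀ c, 0 ≤ t c) (β b : E)
    (hC : ∀ c, exp |L c b| ≤ C) :
    C⁻¹ * ∑ c, t c * exp (L c β) * L c b ^ 2 ≤
      fderiv ℝ (expLinearLoss n t L) (β + b) b - fderiv ℝ (expLinearLoss n t L) β b := by
  rw [fderiv_expLinearLoss_add_sub, Finset.mul_sum]
  refine Finset.sum_le_sum fun c _ => ?_
  have hw : 0 ≤ t c * exp (L c β) := mul_nonneg (ht c) (exp_pos _).le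
  have hCinv : C⁻¹ ≤ exp (-|L c b|) := by
    rw [exp_neg]; exact inv_anti₀ (exp_pos _) (hC c)
  calc C⁻¹ * (t c * exp (L c β) * L c b ^ 2)
      = t c * exp (L c β) * (C⁻¹ * L c b ^ 2) := by ring
    _ ≤ t c * exp (L c β) * (exp (-|L c b|) * L c b ^ 2) := by gcongr
    _ ≤ t c * exp (L c β) * (L c b * (exp (L c b) - 1)) :=
        mul_le_mul_of_nonneg_left (exp_neg_abs_mul_sq_le_mul_exp_sub_one _) hw

end ExpLinearLoss

theorem grad_diff_two_sided_bound {d : ℕ} {ι : Type*} [Fintype ι] [Nonempty ι]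
    (n t : ι → ℝ) (z : ι → Fin d → ℝ) (ht : ∀ c, 0 ≤ t c)
    (ell : (Fin d → ℝ) → ℝ)
    (hell : ell = fun θ =>
      ∑ c, (-(n c) * ∑ i, θ i * z c i + t c * Real.exp (∑ i, θ i * z c i)))
    (β b : Fin d → ℝ)
    (cb : ℝ)
    (hcb : cb = Finset.univ.sup' Finset.univ_nonempty
      fun c => Real.exp |∑ i, b i * z c i|) :
    cb⁻¹ * (∑ c, t c * Real.exp (∑ i, β i * z c i) * (∑ i, b i * z c i) ^ 2) ≤
      fderiv ℝ ell (β + b) b - fderiv ℝ ell β b ∧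
    fderiv ℝ ell (β + b) b - fderiv ℝ ell β b ≤
      cb * (∑ c, t c * Real.exp (∑ i, β i * z c i) * (∑ i, b i * z c i) ^ 2) := by
  let L : ι → (Fin d → ℝ) →L[ℝ] ℝ := fun c => ∑ i, z c i • ContinuousLinearMap.proj i
  have hL : ∀ c θ, L c θ = ∑ i, θ i * z c i := fun c θ => by simp [L, mul_comm]
  have hell' : ell = expLinearLoss n t L := by
    funext θ
    simp only [hell, expLinearLoss, hL]
  have hC : ∀ c, exp |L c b| ≤ cb := fun c => by
    rw [hcb, hL]
    exact Finset.le_sup' (fun c => exp |∑ i, b i * z c i|) (Finset.mem_univ c)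
  simp only [hell', ← hL]
  exact ⟨le_fderiv_expLinearLoss_add_sub ht β b hC, fderiv_expLinearLoss_add_sub_le ht β b hC⟩
end
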